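/- If G is a connected graph on 5 vertices containing a spanning 5-cycle (i.e., a Hamiltonian cycle) and G is not itself a 5-cycle, then there is a vertex w of G with degree at least 3, and ι(G,2) = 1. -/

import Mathlib

open SimpleGraph

/-!
Mapping the spanning 5-cycle onto `G` gives a bijective homomorphism `C₅ →g G`. If every vertex of
`G` had degree at most 2, each neighbourhood in `G` would be the image of the corresponding
neighbourhood in `C₅`, so the map would be an isomorphism; hence some `w` has degree at least 3.
Then `N[w]` has at least 4 of the 5 vertices, so `G − N[w]` has no edge and `ι(G,2) ≤ 1`, while
`ι(G,2) ≠ 0` because `G` has an edge.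
-/

variable {V : Type*}

/-- The closed neighbourhood `N[D]` of a set `D` of vertices of `G`. -/
def closedNbhd (G : SimpleGraph V) (D : Set V) : Set V :=
  {w | ∃ d ∈ D, w = d ∨ G.Adj d w}

/-- `D` is a `k`-clique isolating set of `G` if `G − N[D]` contains no `k`-clique. -/
def IsKCliqueIsolating (G : SimpleGraph V) (k : ℕ) (D : Set V) : Prop :=
  ∀ s : Finset ((closedNbhd G D)ᶜ : Set V), ¬ (G.induce (closedNbhd G D)ᶜ).IsNClique k s

/-- `ι(G,k)`: the minimum size of a `k`-clique isolating set of `G`. -/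
noncomputable def iso (G : SimpleGraph V) (k : ℕ) : ℕ :=
  sInf {m | ∃ D : Set V, IsKCliqueIsolating G k D ∧ D.ncard = m}

namespace SimpleGraph

variable {W : Type*} {G : SimpleGraph V} {H : SimpleGraph W}

theorem Hom.neighborSet_eq_image [Finite V] (f : H →g G) (hf : Function.Injective f) {v : W}
    (hv : (G.neighborSet (f v)).ncard ≤ (H.neighborSet v).ncard) :
    G.neighborSet (f v) = f '' H.neighborSet v := by
  have hsub : f '' H.neighborSet v ⊆ G.neighborSet (f v) := by
    rintro _ ⟨x, hx, rfl⟩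
    exact f.map_adj hx
  refine (Set.eq_of_subset_of_ncard_le hsub ?_ (Set.toFinite _)).symm
  rwa [Set.ncard_image_of_injective _ hf]

theorem Hom.nonempty_iso_of_bijective [Finite V] (f : H →g G) (hf : Function.Bijective f)
    (hdeg : ∀ v, (G.neighborSet (f v)).ncard ≤ (H.neighborSet v).ncard) : Nonempty (H ≃g G) := by
  refine ⟨⟨Equiv.ofBijective f hf, fun {a b} => ⟨fun hab => ?_, f.map_adj⟩⟩⟩
  have : f b ∈ f '' H.neighborSet a := f.neighborSet_eq_image hf.1 (hdeg a) ▸ hab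
  exact (Set.InjOn.mem_image_iff hf.1.injOn (Set.subset_univ _) (Set.mem_univ b)).1 this

theorem ncard_neighborSet_cycleGraph {n : ℕ} (v : Fin (n + 3)) :
    ((cycleGraph (n + 3)).neighborSet v).ncard = 2 := by
  rw [← coe_neighborFinset, Set.ncard_coe_finset, card_neighborFinset_eq_degree,
    cycleGraph_degree_three_le]

end SimpleGraph

theorem closedNbhd_empty (G : SimpleGraph V) : closedNbhd G ∅ = ∅ := by
  simp [closedNbhd]

theorem closedNbhd_singleton (G : SimpleGraph V) (w : V) :
    closedNbhd G {w} = insert w (G.neighborSet w) := by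
  ext x; simp [closedNbhd, eq_comm]

theorem ncard_closedNbhd_singleton [Finite V] (G : SimpleGraph V) (w : V) :
    (closedNbhd G {w}).ncard = (G.neighborSet w).ncard + 1 := by
  rw [closedNbhd_singleton, Set.ncard_insert_of_notMem G.notMem_neighborSet_self]

theorem isKCliqueIsolating_iff_cliqueFree (G : SimpleGraph V) (k : ℕ) (D : Set V) :
    IsKCliqueIsolating G k D ↔ (G.induce (closedNbhd G D)ᶜ).CliqueFree k := Iff.rfl

theorem cliqueFree_of_isKCliqueIsolating_empty {G : SimpleGraph V} {k : ℕ}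
    (h : IsKCliqueIsolating G k ∅) : G.CliqueFree k := by
  rw [isKCliqueIsolating_iff_cliqueFree, closedNbhd_empty, Set.compl_empty] at h
  exact h.comap G.induceUnivIso.isContained'

theorem isKCliqueIsolating_of_ncard_compl_lt [Finite V] {G : SimpleGraph V} {k : ℕ} {D : Set V}
    (h : (closedNbhd G D)ᶜ.ncard < k) : IsKCliqueIsolating G k D := by
  classical
  have := Fintype.ofFinite V
  refine cliqueFree_of_card_lt ?_
  rwa [← Nat.card_eq_fintype_card, Nat.card_coe_set_eq]

theorem iso_eq_one_of_isKCliqueIsolating_singleton [Finite V] {G : SimpleGraph V} {k : ℕ}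
    (hG : ¬ G.CliqueFree k) {w : V} (hw : IsKCliqueIsolating G k {w}) : iso G k = 1 := by
  have hmem : 1 ∈ {m | ∃ D : Set V, IsKCliqueIsolating G k D ∧ D.ncard = m} :=
    ⟨{w}, hw, Set.ncard_singleton w⟩
  refine le_antisymm (Nat.sInf_le hmem) (Nat.one_le_iff_ne_zero.2 fun h0 => ?_)
  obtain ⟨D, hD, hD0⟩ : iso G k ∈ _ := Nat.sInf_mem ⟨1, hmem⟩
  rw [h0, Set.ncard_eq_zero] at hD0
  exact hG (cliqueFree_of_isKCliqueIsolating_empty (hD0 ▸ hD))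

theorem stmt17_general [Fintype V] (G : SimpleGraph V) (h5 : Fintype.card V = 5)
    (hham : ∃ f : SimpleGraph.cycleGraph 5 →g G, Function.Injective f)
    (hC5 : ¬ Nonempty (G ≃g SimpleGraph.cycleGraph 5)) :
    (∃ w : V, 3 ≤ (G.neighborSet w).ncard) ∧ iso G 2 = 1 := by
  obtain ⟨f, hf⟩ := hham
  have hbij : Function.Bijective f :=
    (Fintype.bijective_iff_injective_and_card f).2 ⟨hf, by simp [h5]⟩
  obtain ⟨w, hw⟩ : ∃ w : V, 3 ≤ (G.neighborSet w).ncard := by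
    by_contra! hdeg
    refine hC5 ⟨(f.nonempty_iso_of_bijective hbij fun v => ?_).some.symm⟩
    rw [ncard_neighborSet_cycleGraph (n := 2)]
    exact Nat.le_of_lt_succ (hdeg (f v))
  have hcompl : (closedNbhd G {w})ᶜ.ncard < 2 := by
    have := Set.ncard_add_ncard_compl (closedNbhd G {w})
    rw [ncard_closedNbhd_singleton, Nat.card_eq_fintype_card, h5] at this
    omega
  have hedge : ¬ G.CliqueFree 2 := by
    rw [cliqueFree_two]
    exact ne_bot_iff_exists_adj.2 ⟨_, _, f.map_adj (show (cycleGraph 5).Adj 0 1 by decide)⟩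
  exact ⟨⟨w, hw⟩,
    iso_eq_one_of_isKCliqueIsolating_singleton hedge (isKCliqueIsolating_of_ncard_compl_lt hcompl)⟩

theorem stmt17 [Fintype V] (G : SimpleGraph V) (h5 : Fintype.card V = 5)
    (hconn : G.Connected)
    (hham : ∃ f : SimpleGraph.cycleGraph 5 →g G, Function.Injective f)
    (hC5 : ¬ Nonempty (G ≃g SimpleGraph.cycleGraph 5)) :
    (∃ w : V, 3 ≤ (G.neighborSet w).ncard) ∧ iso G 2 = 1 :=
  stmt17_general G h5 hham hC5
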